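/- For general points, if d ≥ 6n and n ≥ 1, then ℓ(L(d, d, 6^n)) = d − 6n. Since v(L(d, d, 6^n)) = d − 21n, this system is special. -/

import Mathlib

open MvPolynomial

/-- The iterated partial derivative corresponding to the multi-index `ν`. -/
noncomputable def mderiv (ν : Fin 3 → ℕ) :
    MvPolynomial (Fin 3) ℂ →ₗ[ℂ] MvPolynomial (Fin 3) ℂ :=
  ((pderiv (R := ℂ) (0 : Fin 3)).toLinearMap ^ ν 0) ∘ₗ
  ((pderiv (R := ℂ) (1 : Fin 3)).toLinearMap ^ ν 1) ∘ₗ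
  ((pderiv (R := ℂ) (2 : Fin 3)).toLinearMap ^ ν 2)

/-- The linear system `L(d; m)` of homogeneous forms of degree `d` in three variables
all of whose partial derivatives of order `< m i` vanish at the point `p i`,
i.e. plane curves of degree `d` with multiplicity at least `m i` at `p i`. -/
noncomputable def linSys {k : ℕ} (p : Fin k → Fin 3 → ℂ) (d : ℕ) (m : Fin k → ℕ) :
    Submodule ℂ (MvPolynomial (Fin 3) ℂ) :=
  (homogeneousSubmodule (Fin 3) ℂ d) ⊓
    ⨅ (i : Fin k), ⨅ (ν : Fin 3 → ℕ), ⨅ (_ : ν 0 + ν 1 + ν 2 < m i),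
      LinearMap.ker ((aeval (p i)).toLinearMap ∘ₗ mderiv ν)

/-- The projective dimension `ℓ` of the linear system (`-1` means empty). -/
noncomputable def projDim {k : ℕ} (p : Fin k → Fin 3 → ℂ) (d : ℕ) (m : Fin k → ℕ) : ℤ :=
  (Module.finrank ℂ (linSys p d m) : ℤ) - 1

/-- The virtual dimension `v = d(d+3)/2 - ∑ mᵢ(mᵢ+1)/2`. -/
def virtDim {k : ℕ} (d : ℕ) (m : Fin k → ℕ) : ℤ :=
  ((d : ℤ) * (d + 3)) / 2 - ∑ i : Fin k, ((m i : ℤ) * (m i + 1)) / 2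

/-- The quasi-homogeneous multiplicity vector `(m₀, 6, …, 6)` on `n + 1` points. -/
def qh (n m0 : ℕ) : Fin (n + 1) → ℕ := fun i => if i = 0 then m0 else 6

/-- A property `Q` of configurations of `k` points of `ℙ²` (given by nonzero homogeneous
coordinate vectors) holds for points in general position: there is a nonzero polynomial
in the coordinates such that `Q` holds whenever it does not vanish. -/
def Generically (k : ℕ) (Q : (Fin k → Fin 3 → ℂ) → Prop) : Prop :=
  ∃ P : MvPolynomial (Fin k × Fin 3) ℂ, P ≠ 0 ∧
    ∀ p : Fin k → Fin 3 → ℂ, (∀ i, p i ≠ 0) →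
      eval (fun x => p x.1 x.2) P ≠ 0 → Q p

/-!
A curve of degree `d` with a point of multiplicity `d` at `p₀` is a cone with vertex `p₀`: after
the shear moving `p₀` to `[0 : 0 : 1]` no monomial of its equation contains `z`, so the equation is
a binary form of degree `d` in coordinates of the pencil of lines through `p₀`, the homogenization
of a polynomial `Q` of degree `≤ d` in the slope of these lines. Such a cone has multiplicity
`≥ 6` at a point `pⱼ` off the vertex exactly when the slope `rⱼ` of the line `p₀pⱼ` is a root of
`Q` of multiplicity `≥ 6`: the `x`-derivatives of the cone at `pⱼ` are, up to a nonzero factor,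
the derivatives of `Q` at `rⱼ`, and conversely `(X - rⱼ)⁶ ∣ Q` puts the equation in the sixth
power of the ideal of `pⱼ`. For general points the slopes are distinct, so `L(d, d, 6ⁿ)` is the
image of the space of `Q = ∏ⱼ (X - rⱼ)⁶ h` with `deg h ≤ d - 6n`, of dimension `d - 6n + 1`.
-/

open scoped Polynomial

namespace MvPolynomial

section Derivatives

variable {R σ τ : Type*} [CommSemiring R]

theorem pderiv_aeval_of_pderiv_eq_single [DecidableEq τ] {g : τ → MvPolynomial σ R} {i : σ}
    {k : τ} (hg : ∀ j, pderiv i (g j) = Pi.single (M := fun _ => MvPolynomial σ R) k 1 j)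
    (H : MvPolynomial τ R) :
    pderiv i (aeval g H) = aeval g (pderiv k H) := by
  induction H using MvPolynomial.induction_on with
  | C a => simp
  | add p q hp hq => simp only [map_add, hp, hq]
  | mul_X p j hp =>
    simp only [map_mul, Derivation.leibniz, hp, aeval_X, hg, pderiv_X, smul_eq_mul]
    rcases eq_or_ne j k with rfl | hjk <;> simp [*]

theorem pow_pderiv_aeval_of_pderiv_eq_single [DecidableEq τ] {g : τ → MvPolynomial σ R}
    {i : σ} {k : τ} (hg : ∀ j, pderiv i (g j) = Pi.single (M := fun _ => MvPolynomial σ R) k 1 j)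
    (a : ℕ) (H : MvPolynomial τ R) :
    ((pderiv i).toLinearMap ^ a) (aeval g H) = aeval g (((pderiv k).toLinearMap ^ a) H) :=
  LinearMap.congr_fun (Module.End.commute_pow_left_of_commute (f := (aeval g).toLinearMap)
    (LinearMap.ext (pderiv_aeval_of_pderiv_eq_single hg)) a) H

theorem pow_pderiv_X_pow_mul {i : σ} {M : MvPolynomial σ R} (hM : pderiv i M = 0) (a n : ℕ) :
    ((pderiv i).toLinearMap ^ a) (X i ^ n * M) = n.descFactorial a • (X i ^ (n - a) * M) := by
  induction a generalizing n with
  | zero => simp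
  | succ a ih =>
    rw [pow_succ, Module.End.mul_apply]
    have hstep : (pderiv i).toLinearMap (X i ^ n * M) = n • (X i ^ (n - 1) * M) := by
      classical
      simp [hM, Derivation.leibniz_pow, nsmul_eq_mul, mul_comm, mul_left_comm]
    rcases n with _ | n
    · rw [hstep]; simp
    · rw [hstep, map_nsmul, Nat.add_sub_cancel, ih, smul_smul, Nat.succ_descFactorial_succ,
        Nat.add_sub_add_right]

variable {J : Ideal (MvPolynomial σ R)}

theorem pderiv_mem_pow_of_mem_pow_succ (i : σ) {m : ℕ} {F : MvPolynomial σ R}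
    (hF : F ∈ J ^ (m + 1)) : pderiv i F ∈ J ^ m := by
  induction m generalizing F with
  | zero => simp [Ideal.one_eq_top]
  | succ m ih =>
    rw [pow_succ'] at hF
    refine Submodule.mul_induction_on hF (fun a ha b hb => ?_) fun x y hx hy => ?_
    · rw [Derivation.leibniz, smul_eq_mul, smul_eq_mul]
      refine add_mem ?_ (Ideal.mul_mem_right _ _ hb)
      rw [pow_succ']
      exact Ideal.mul_mem_mul ha (ih hb)
    · rw [map_add]; exact add_mem hx hy

theorem pow_pderiv_mem_pow (i : σ) (a : ℕ) {m : ℕ} {F : MvPolynomial σ R} (hF : F ∈ J ^ m) :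
    ((pderiv i).toLinearMap ^ a) F ∈ J ^ (m - a) := by
  induction a with
  | zero => simpa using hF
  | succ a ih =>
    rw [pow_succ', Module.End.mul_apply]
    rcases Nat.lt_or_ge a m with h | h
    · rw [show m - a = m - (a + 1) + 1 by omega] at ih
      exact pderiv_mem_pow_of_mem_pow_succ i ih
    · simp [Nat.sub_eq_zero_of_le (Nat.le_succ_of_le h), Ideal.one_eq_top]

end Derivatives

theorem IsHomogeneous.aeval_mem_pow {R σ S : Type*} [CommSemiring R] [CommSemiring S]
    [Algebra R S] {H : MvPolynomial σ R} {n : ℕ} (hH : H.IsHomogeneous n) {g : σ → S}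
    {J : Ideal S} (hg : ∀ i, g i ∈ J) : MvPolynomial.aeval g H ∈ J ^ n := by
  classical
  rw [H.as_sum, map_sum]
  refine Ideal.sum_mem _ fun μ hμ => ?_
  rw [aeval_monomial, Finsupp.prod]
  refine Ideal.mul_mem_left _ _ ?_
  have hdeg : ∑ i ∈ μ.support, μ i = n := by
    simpa [Finsupp.weight_apply, Finsupp.sum] using hH (mem_support_iff.mp hμ)
  rw [← hdeg, ← Finset.prod_pow_eq_pow_sum]
  exact Ideal.prod_mem_prod fun i _ => Ideal.pow_mem_pow (hg i) _

end MvPolynomial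

namespace Polynomial

variable {R : Type*} [CommSemiring R]

theorem pderiv_zero_homogenize (Q : R[X]) (n : ℕ) :
    MvPolynomial.pderiv 0 (Q.homogenize (n + 1)) = (derivative Q).homogenize n := by
  induction Q using Polynomial.induction_on' with
  | add p q hp hq => simp [hp, hq]
  | monomial k c =>
    rw [derivative_monomial]
    rcases Nat.lt_or_ge (n + 1) k with hk | hk
    · rw [homogenize_monomial_of_lt hk, homogenize_monomial_of_lt (by omega), map_zero]
    rcases k with _ | k
    · simp
    rw [homogenize_monomial hk, homogenize_monomial (by omega), MvPolynomial.pderiv_monomial]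
    refine congrArg₂ (fun s a => MvPolynomial.monomial s a) ?_ (by simp)
    ext i; fin_cases i <;> simp

theorem pow_pderiv_zero_homogenize (Q : R[X]) (a n : ℕ) :
    ((MvPolynomial.pderiv 0).toLinearMap ^ a) (Q.homogenize (n + a)) =
      (derivative^[a] Q).homogenize n := by
  induction a generalizing Q with
  | zero => simp
  | succ a ih =>
    rw [pow_succ, Module.End.mul_apply, ← add_assoc, Derivation.coeFn_coe,
      pderiv_zero_homogenize, ih, Function.iterate_succ_apply]

theorem natDegree_aeval_X_one_le {G : MvPolynomial (Fin 2) R} {n : ℕ}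
    (hG : G.IsHomogeneous n) :
    (MvPolynomial.aeval (![X, 1] : Fin 2 → R[X]) G).natDegree ≤ n := by
  rw [G.as_sum, map_sum]
  refine natDegree_sum_le_of_forall_le _ _ fun μ hμ => ?_
  have hdeg : μ 0 + μ 1 = n := by
    simpa [Finsupp.weight_apply, Finsupp.sum_fintype] using
      hG (MvPolynomial.mem_support_iff.mp hμ)
  rw [MvPolynomial.aeval_monomial, Finsupp.prod_fintype _ _ (by simp), Fin.prod_univ_two]
  simp only [Matrix.cons_val_zero, Matrix.cons_val_one, one_pow, mul_one, ← C_eq_algebraMap]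
  exact (natDegree_C_mul_X_pow_le _ _).trans (by omega)

theorem homogenize_X_sub_C_pow {R : Type*} [CommRing R] (r : R) (m : ℕ) :
    ((X - C r) ^ m).homogenize m =
      (MvPolynomial.X 0 - MvPolynomial.C r * MvPolynomial.X 1 : MvPolynomial (Fin 2) R) ^ m :=
  homogenize_eq_of_isHomogeneous (by
    simpa using ((MvPolynomial.isHomogeneous_X R (0 : Fin 2)).sub
      (MvPolynomial.isHomogeneous_C_mul_X r (1 : Fin 2))).pow m) (by simp)

theorem mem_degreeLT_succ_iff {Q : R[X]} {k : ℕ} : Q ∈ degreeLT R (k + 1) ↔ Q.natDegree ≤ k := by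
  rw [degreeLT_succ_eq_degreeLE, mem_degreeLE, natDegree_le_iff_degree_le]

end Polynomial

section Shear

variable {R : Type*} [CommRing R]

noncomputable def shearVars (c : Fin 2 → R) : Fin 3 → MvPolynomial (Fin 3) R :=
  ![X 0 - C (c 0) * X 2, X 1 - C (c 1) * X 2, X 2]

theorem aeval_shearVars_comp_aeval_shearVars (c c' : Fin 2 → R) :
    (aeval (shearVars c)).comp (aeval (shearVars c')) = aeval (shearVars (c + c')) := by
  refine MvPolynomial.algHom_ext fun i => ?_
  fin_cases i <;> simp [shearVars] <;> ring

theorem aeval_shearVars_zero : aeval (shearVars (0 : Fin 2 → R)) = AlgHom.id R _ := by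
  refine MvPolynomial.algHom_ext fun i => ?_
  fin_cases i <;> simp [shearVars]

/-- Pulls forms back along `[x : y : z] ↦ [x - c₀ z : y - c₁ z : z]`, so it carries a point of
a curve at `[0 : 0 : 1]` to a point of the same multiplicity at `[c₀ : c₁ : 1]`. -/
noncomputable def shear (c : Fin 2 → R) : MvPolynomial (Fin 3) R ≃ₐ[R] MvPolynomial (Fin 3) R :=
  AlgEquiv.ofAlgHom (aeval (shearVars c)) (aeval (shearVars (-c)))
    (by rw [aeval_shearVars_comp_aeval_shearVars, add_neg_cancel, aeval_shearVars_zero])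
    (by rw [aeval_shearVars_comp_aeval_shearVars, neg_add_cancel, aeval_shearVars_zero])

theorem shear_apply (c : Fin 2 → R) (F : MvPolynomial (Fin 3) R) :
    shear c F = aeval (shearVars c) F := rfl

theorem aeval_shear (c : Fin 2 → R) (q : Fin 3 → R) (F : MvPolynomial (Fin 3) R) :
    aeval q (shear c F) = aeval ![q 0 - c 0 * q 2, q 1 - c 1 * q 2, q 2] F := by
  rw [shear_apply, comp_aeval_apply]
  congr
  funext i
  fin_cases i <;> simp [shearVars]

theorem isHomogeneous_shearVars (c : Fin 2 → R) (i : Fin 3) : (shearVars c i).IsHomogeneous 1 := by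
  fin_cases i
  exacts [(isHomogeneous_X R 0).sub (isHomogeneous_C_mul_X _ 2),
    (isHomogeneous_X R 1).sub (isHomogeneous_C_mul_X _ 2), isHomogeneous_X R 2]

theorem isHomogeneous_shear {F : MvPolynomial (Fin 3) R} {n : ℕ} (hF : F.IsHomogeneous n)
    (c : Fin 2 → R) : (shear c F).IsHomogeneous n := by
  rw [shear_apply]
  simpa only [one_mul] using hF.aeval _ (isHomogeneous_shearVars c)

theorem isHomogeneous_shear_symm {F : MvPolynomial (Fin 3) R} {n : ℕ}
    (hF : F.IsHomogeneous n) (c : Fin 2 → R) : ((shear c).symm F).IsHomogeneous n :=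
  isHomogeneous_shear hF (-c)

/-- The cone with vertex `[c₀ : c₁ : 1]` over the binary form `Q.homogenize d`, written in the
linear forms `x - c₀ z` and `y - c₁ z`; each root `r` of `Q` gives the component
`x - c₀ z = r (y - c₁ z)`. -/
noncomputable def cone (c : Fin 2 → R) (d : ℕ) : R[X] →ₗ[R] MvPolynomial (Fin 3) R :=
  (shear c).toLinearMap ∘ₗ (rename Fin.castSucc).toLinearMap ∘ₗ Polynomial.homogenizeLM d

theorem cone_apply (c : Fin 2 → R) (d : ℕ) (Q : R[X]) :
    cone c d Q = shear c (rename Fin.castSucc (Q.homogenize d)) := rfl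

theorem cone_eq_aeval (c : Fin 2 → R) (d : ℕ) (Q : R[X]) :
    cone c d Q = aeval (shearVars c ∘ Fin.castSucc) (Q.homogenize d) := by
  rw [cone_apply, shear_apply, aeval_rename]

theorem isHomogeneous_cone (c : Fin 2 → R) (d : ℕ) (Q : R[X]) : (cone c d Q).IsHomogeneous d :=
  isHomogeneous_shear (Q.isHomogeneous_homogenize).rename_isHomogeneous c

theorem eq_zero_of_cone_eq_zero {c : Fin 2 → R} {d : ℕ} {Q : R[X]} (hQ : Q.natDegree ≤ d)
    (h : cone c d Q = 0) : Q = 0 := by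
  rw [cone_apply, map_eq_zero_iff _ (shear c).injective,
    map_eq_zero_iff _ (rename_injective _ (Fin.castSucc_injective 2))] at h
  exact Polynomial.eq_zero_of_homogenize_eq_zero hQ h

theorem aeval_cone (c : Fin 2 → R) (d : ℕ) (Q : R[X]) (q : Fin 3 → R) :
    aeval q (cone c d Q) = eval ![q 0 - c 0 * q 2, q 1 - c 1 * q 2] (Q.homogenize d) := by
  rw [cone_apply, aeval_shear, aeval_rename]
  exact congrArg (fun g => eval g (Q.homogenize d)) (funext fun i => by fin_cases i <;> rfl)

end Shear

section Multiplicity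

open Polynomial (derivative)

/-- The curve `F = 0` has multiplicity at least `m` at the point `q`. -/
def VanishesToOrder (q : Fin 3 → ℂ) (m : ℕ) (F : MvPolynomial (Fin 3) ℂ) : Prop :=
  ∀ ν : Fin 3 → ℕ, ν 0 + ν 1 + ν 2 < m → aeval q (mderiv ν F) = 0

theorem mem_linSys_iff {k : ℕ} {p : Fin k → Fin 3 → ℂ} {d : ℕ} {m : Fin k → ℕ}
    {F : MvPolynomial (Fin 3) ℂ} :
    F ∈ linSys p d m ↔ F.IsHomogeneous d ∧ ∀ i, VanishesToOrder (p i) (m i) F := by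
  simp [linSys, Submodule.mem_iInf, VanishesToOrder, mem_homogeneousSubmodule]

theorem vanishesToOrder_of_mem_span_pow {q : Fin 3 → ℂ} {S : Set (MvPolynomial (Fin 3) ℂ)}
    (hS : ∀ g ∈ S, aeval q g = 0) {m : ℕ} {F : MvPolynomial (Fin 3) ℂ}
    (hF : F ∈ Ideal.span S ^ m) : VanishesToOrder q m F := by
  intro ν hν
  have hmem : mderiv ν F ∈ Ideal.span S ^ (m - ν 2 - ν 1 - ν 0) := by
    simpa [mderiv] using pow_pderiv_mem_pow 0 (ν 0)
      (pow_pderiv_mem_pow 1 (ν 1) (pow_pderiv_mem_pow 2 (ν 2) hF))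
  have hker : Ideal.span S ≤ RingHom.ker (aeval q) :=
    Ideal.span_le.mpr fun g hg => RingHom.mem_ker.mpr (hS g hg)
  exact hker (Ideal.pow_le_self (by omega) hmem)

theorem mderiv_xy_apply (a b : ℕ) (F : MvPolynomial (Fin 3) ℂ) :
    mderiv ![a, b, 0] F = ((pderiv 0).toLinearMap ^ a) (((pderiv 1).toLinearMap ^ b) F) := rfl

theorem mderiv_shear (c : Fin 2 → ℂ) (a b : ℕ) (G : MvPolynomial (Fin 3) ℂ) :
    mderiv ![a, b, 0] (shear c G) = shear c (mderiv ![a, b, 0] G) := by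
  have hvars (i : Fin 3) (hi : i ≠ 2) (j : Fin 3) :
      pderiv i (shearVars c j) = Pi.single (M := fun _ => MvPolynomial (Fin 3) ℂ) i 1 j := by
    fin_cases i <;> fin_cases j <;> simp_all [shearVars, pderiv_X]
  rw [mderiv_xy_apply, mderiv_xy_apply, shear_apply, shear_apply,
    pow_pderiv_aeval_of_pderiv_eq_single (hvars 1 (by decide)),
    pow_pderiv_aeval_of_pderiv_eq_single (hvars 0 (by decide))]

theorem aeval_mderiv_monomial (q : Fin 3 → ℂ) (a b : ℕ) (μ : Fin 3 →₀ ℕ) (c : ℂ) :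
    aeval q (mderiv ![a, b, 0] (monomial μ c)) =
      c * (μ 0).descFactorial a * (μ 1).descFactorial b *
        q 0 ^ (μ 0 - a) * q 1 ^ (μ 1 - b) * q 2 ^ μ 2 := by
  have hμ : monomial μ c = X 1 ^ μ 1 * (X 0 ^ μ 0 * (C c * X 2 ^ μ 2)) := by
    rw [monomial_eq, Finsupp.prod_fintype _ _ (by simp), Fin.prod_univ_three]; ring
  have h01 : pderiv 1 (X 0 ^ μ 0 * (C c * X 2 ^ μ 2) : MvPolynomial (Fin 3) ℂ) = 0 := by
    simp [pderiv_X]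
  have h0 : pderiv 0 (X 1 ^ (μ 1 - b) * (C c * X 2 ^ μ 2) : MvPolynomial (Fin 3) ℂ) = 0 := by
    simp [pderiv_X]
  rw [mderiv_xy_apply, hμ, pow_pderiv_X_pow_mul h01, map_nsmul, mul_left_comm,
    pow_pderiv_X_pow_mul h0]
  simp only [nsmul_eq_mul, map_mul, map_natCast, map_pow, aeval_X, aeval_C,
    Algebra.algebraMap_self, RingHom.id_apply]
  ring

theorem descFactorial_mul_zero_pow {R : Type*} [Semiring R] (n k : ℕ) :
    (n.descFactorial k : R) * 0 ^ (n - k) = if n = k then (k.factorial : R) else 0 := by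
  rcases lt_trichotomy n k with h | rfl | h
  · simp [Nat.descFactorial_eq_zero_iff_lt.mpr h, h.ne]
  · simp [Nat.descFactorial_self]
  · simp [h.ne', zero_pow (Nat.sub_ne_zero_of_lt h)]

theorem aeval_mderiv_monomial_at_axis (γ : ℂ) (a b : ℕ) (μ : Fin 3 →₀ ℕ) (c : ℂ) :
    aeval ![0, 0, γ] (mderiv ![a, b, 0] (monomial μ c)) =
      if μ 0 = a ∧ μ 1 = b then c * a.factorial * b.factorial * γ ^ μ 2 else 0 := by
  rw [aeval_mderiv_monomial]
  simp only [Matrix.cons_val_zero, Matrix.cons_val_one, Matrix.cons_val_two, Matrix.tail_cons,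
    Matrix.head_cons]
  calc _ = c * ((μ 0).descFactorial a * 0 ^ (μ 0 - a)) * ((μ 1).descFactorial b * 0 ^ (μ 1 - b))
        * γ ^ μ 2 := by ring
    _ = _ := by
      rw [descFactorial_mul_zero_pow, descFactorial_mul_zero_pow]
      split_ifs <;> simp_all

theorem apply_two_eq_zero_of_mem_support {G : MvPolynomial (Fin 3) ℂ} {d : ℕ}
    (hG : G.IsHomogeneous d) {γ : ℂ} (hγ : γ ≠ 0)
    (h : ∀ a b, a + b < d → aeval ![0, 0, γ] (mderiv ![a, b, 0] G) = 0) :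
    ∀ μ ∈ G.support, μ 2 = 0 := by
  have hdeg : ∀ μ ∈ G.support, μ 0 + μ 1 + μ 2 = d := fun μ hμ => by
    simpa [Finsupp.weight_apply, Finsupp.sum_fintype, Fin.sum_univ_three] using
      hG (mem_support_iff.mp hμ)
  intro μ hμ
  by_contra hμ2
  have hval := h (μ 0) (μ 1) (by have := hdeg μ hμ; omega)
  rw [G.as_sum, map_sum, map_sum, Finset.sum_eq_single μ, aeval_mderiv_monomial_at_axis,
    if_pos ⟨rfl, rfl⟩] at hval
  · simp [hγ, Nat.factorial_ne_zero, mem_support_iff.mp hμ] at hval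
  · intro μ' hμ' hne
    rw [aeval_mderiv_monomial_at_axis, if_neg]
    rintro ⟨h0, h1⟩
    have h2 : μ' 2 = μ 2 := by have := hdeg μ' hμ'; have := hdeg μ hμ; omega
    exact hne (Finsupp.ext fun i => by fin_cases i <;> assumption)
  · exact fun h => absurd hμ h

theorem exists_cone_eq_of_vanishesToOrder {c : Fin 2 → ℂ} {q : Fin 3 → ℂ} (hq : q 2 ≠ 0)
    (h0 : q 0 = c 0 * q 2) (h1 : q 1 = c 1 * q 2) {d : ℕ} {F : MvPolynomial (Fin 3) ℂ}
    (hF : F.IsHomogeneous d) (hmult : VanishesToOrder q d F) :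
    ∃ Q : ℂ[X], Q.natDegree ≤ d ∧ cone c d Q = F := by
  have hG := isHomogeneous_shear_symm hF c
  have hvertex : ![q 0 - c 0 * q 2, q 1 - c 1 * q 2, q 2] = ![0, 0, q 2] := by
    rw [h0, h1, sub_self, sub_self]
  have hsupp := apply_two_eq_zero_of_mem_support hG hq fun a b hab => by
    rw [← hvertex, ← aeval_shear, ← mderiv_shear, AlgEquiv.apply_symm_apply]
    exact hmult _ (by simpa using hab)
  have hvars : (((shear c).symm F).vars : Set (Fin 3)) ⊆ Set.range Fin.castSucc := by
    intro i hi
    obtain ⟨μ, hμ, hiμ⟩ := (mem_vars_iff_mem_support i).mp hi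
    have hi2 : i ≠ 2 := by rintro rfl; exact Finsupp.mem_support_iff.mp hiμ (hsupp μ hμ)
    fin_cases i
    exacts [⟨0, rfl⟩, ⟨1, rfl⟩, absurd rfl hi2]
  obtain ⟨G, hGF⟩ := exists_rename_eq_of_vars_subset_range _ _ (Fin.castSucc_injective 2) hvars
  have hGd : G.IsHomogeneous d :=
    (IsHomogeneous.rename_isHomogeneous_iff (Fin.castSucc_injective 2)).mp (hGF ▸ hG)
  refine ⟨aeval ![Polynomial.X, 1] G, Polynomial.natDegree_aeval_X_one_le hGd, ?_⟩
  rw [cone_apply, Polynomial.homogenize_eq_of_isHomogeneous hGd rfl, hGF,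
    AlgEquiv.apply_symm_apply]

theorem vanishesToOrder_cone_of_vertex {c : Fin 2 → ℂ} {q : Fin 3 → ℂ} (h0 : q 0 = c 0 * q 2)
    (h1 : q 1 = c 1 * q 2) (d : ℕ) (Q : ℂ[X]) : VanishesToOrder q d (cone c d Q) := by
  refine vanishesToOrder_of_mem_span_pow (S := Set.range (shearVars c ∘ Fin.castSucc)) ?_ ?_
  · rintro _ ⟨i, rfl⟩
    fin_cases i <;> simp [shearVars, h0, h1]
  · rw [cone_eq_aeval]
    exact Q.isHomogeneous_homogenize.aeval_mem_pow fun i => Ideal.subset_span ⟨i, rfl⟩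

theorem vanishesToOrder_cone_of_dvd {c : Fin 2 → ℂ} {q : Fin 3 → ℂ} {r : ℂ}
    (hr : q 0 - c 0 * q 2 = r * (q 1 - c 1 * q 2)) {m d : ℕ} (hmd : m ≤ d) {Q : ℂ[X]}
    (hQ : Q.natDegree ≤ d) (hdvd : (Polynomial.X - Polynomial.C r) ^ m ∣ Q) :
    VanishesToOrder q m (cone c d Q) := by
  obtain ⟨Q', rfl⟩ := hdvd
  obtain ⟨e, rfl⟩ := Nat.exists_eq_add_of_le hmd
  have hQ' : Q'.natDegree ≤ e := by
    rcases eq_or_ne Q' 0 with rfl | hQ'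
    · simp
    · rw [Polynomial.natDegree_mul (pow_ne_zero _ (Polynomial.X_sub_C_ne_zero r)) hQ'] at hQ
      simp only [Polynomial.natDegree_pow, Polynomial.natDegree_X_sub_C, mul_one] at hQ
      omega
  refine vanishesToOrder_of_mem_span_pow (S := {shearVars c 0 - C r * shearVars c 1}) ?_ ?_
  · simp [shearVars, hr]
  · rw [cone_eq_aeval, Polynomial.homogenize_mul _ _ (by simp) hQ',
      Polynomial.homogenize_X_sub_C_pow, map_mul, map_pow]
    refine Ideal.mul_mem_right _ _ (Ideal.pow_mem_pow (Ideal.subset_span ?_) m)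
    simp

theorem pow_pderiv_zero_cone (c : Fin 2 → ℂ) (a n : ℕ) (Q : ℂ[X]) :
    ((pderiv 0).toLinearMap ^ a) (cone c (n + a) Q) = cone c n (derivative^[a] Q) := by
  have hvars (j : Fin 2) : pderiv 0 ((shearVars c ∘ Fin.castSucc) j) =
      Pi.single (M := fun _ => MvPolynomial (Fin 3) ℂ) 0 1 j := by
    fin_cases j <;> simp [shearVars, pderiv_X]
  rw [cone_eq_aeval, cone_eq_aeval, pow_pderiv_aeval_of_pderiv_eq_single hvars,
    Polynomial.pow_pderiv_zero_homogenize]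

theorem dvd_of_vanishesToOrder_cone {c : Fin 2 → ℂ} {q : Fin 3 → ℂ} {r : ℂ}
    (hv : q 1 - c 1 * q 2 ≠ 0) (hr : q 0 - c 0 * q 2 = r * (q 1 - c 1 * q 2)) {m d : ℕ}
    {Q : ℂ[X]} (hQ : Q.natDegree ≤ d) (h : VanishesToOrder q m (cone c d Q)) :
    (Polynomial.X - Polynomial.C r) ^ m ∣ Q := by
  rcases eq_or_ne Q 0 with rfl | hQ0
  · exact dvd_zero _
  rcases m with _ | m
  · simp
  rw [← Polynomial.le_rootMultiplicity_iff hQ0]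
  refine Polynomial.lt_rootMultiplicity_of_isRoot_iterate_derivative hQ0 fun a ha => ?_
  rcases le_or_gt a d with had | had
  · obtain ⟨e, rfl⟩ := Nat.exists_eq_add_of_le' had
    have hval := h ![a, 0, 0] (by simp; omega)
    rw [mderiv_xy_apply, pow_zero, Module.End.one_apply, pow_pderiv_zero_cone, aeval_cone,
      Polynomial.eval_homogenize ((Polynomial.natDegree_iterate_derivative Q a).trans (by omega))
        _ (by simpa using hv)] at hval
    simpa [hr, hv] using hval
  · simp [Polynomial.iterate_derivative_eq_zero (hQ.trans_lt had)]

end Multiplicity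

section QuasiHomogeneous

open Polynomial (degreeLT)

noncomputable def sixfoldRoots {n : ℕ} (r : Fin n → ℂ) : ℂ[X] :=
  ∏ j, (Polynomial.X - Polynomial.C (r j)) ^ 6

theorem sixfoldRoots_ne_zero {n : ℕ} (r : Fin n → ℂ) : sixfoldRoots r ≠ 0 :=
  Finset.prod_ne_zero_iff.mpr fun j _ => pow_ne_zero _ (Polynomial.X_sub_C_ne_zero (r j))

theorem natDegree_sixfoldRoots {n : ℕ} (r : Fin n → ℂ) : (sixfoldRoots r).natDegree = 6 * n := by
  rw [sixfoldRoots, Polynomial.natDegree_prod _ _ fun j _ =>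
    pow_ne_zero _ (Polynomial.X_sub_C_ne_zero (r j))]
  simp [mul_comm]

theorem sixfoldRoots_dvd_iff {n : ℕ} {r : Fin n → ℂ} (hr : Function.Injective r) {Q : ℂ[X]} :
    sixfoldRoots r ∣ Q ↔ ∀ j, (Polynomial.X - Polynomial.C (r j)) ^ 6 ∣ Q := by
  rw [sixfoldRoots]
  refine ⟨fun h j => dvd_trans (Finset.dvd_prod_of_mem
    (fun j => (Polynomial.X - Polynomial.C (r j)) ^ 6) (Finset.mem_univ j)) h, fun h => ?_⟩
  refine Finset.prod_dvd_of_coprime (fun j _ k _ hjk => ?_) fun j _ => h j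
  exact (Polynomial.pairwise_coprime_X_sub_C hr hjk).pow

theorem natDegree_sixfoldRoots_mul_le {n d : ℕ} (hd : 6 * n ≤ d) (r : Fin n → ℂ) {h : ℂ[X]}
    (hh : h.natDegree ≤ d - 6 * n) : (sixfoldRoots r * h).natDegree ≤ d :=
  Polynomial.natDegree_mul_le.trans (by rw [natDegree_sixfoldRoots]; omega)

theorem linSys_qh_eq_map {n d : ℕ} {p : Fin (n + 1) → Fin 3 → ℂ} {c : Fin 2 → ℂ}
    {r : Fin n → ℂ} (hd : 6 * n ≤ d) (hp2 : p 0 2 ≠ 0) (hp0 : p 0 0 = c 0 * p 0 2)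
    (hp1 : p 0 1 = c 1 * p 0 2) (hv : ∀ j : Fin n, p j.succ 1 - c 1 * p j.succ 2 ≠ 0)
    (hr : ∀ j : Fin n, p j.succ 0 - c 0 * p j.succ 2 = r j * (p j.succ 1 - c 1 * p j.succ 2))
    (hinj : Function.Injective r) :
    linSys p d (qh n d) =
      (degreeLT ℂ (d - 6 * n + 1)).map (cone c d ∘ₗ LinearMap.mulLeft ℂ (sixfoldRoots r)) := by
  have hqh0 : qh n d 0 = d := if_pos rfl
  have hqhs (j : Fin n) : qh n d j.succ = 6 := if_neg (Fin.succ_ne_zero j)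
  ext F
  simp only [Submodule.mem_map, LinearMap.comp_apply, LinearMap.mulLeft_apply,
    Polynomial.mem_degreeLT_succ_iff]
  constructor
  · intro hF
    obtain ⟨hhom, hmult⟩ := mem_linSys_iff.mp hF
    obtain ⟨Q, hQd, rfl⟩ := exists_cone_eq_of_vanishesToOrder hp2 hp0 hp1 hhom (hqh0 ▸ hmult 0)
    obtain ⟨h, rfl⟩ := (sixfoldRoots_dvd_iff hinj).mpr fun j =>
      dvd_of_vanishesToOrder_cone (hv j) (hr j) hQd (hqhs j ▸ hmult j.succ)
    refine ⟨h, ?_, rfl⟩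
    rcases eq_or_ne h 0 with rfl | hh
    · simp
    rw [Polynomial.natDegree_mul (sixfoldRoots_ne_zero r) hh, natDegree_sixfoldRoots] at hQd
    omega
  · rintro ⟨h, hh, rfl⟩
    refine mem_linSys_iff.mpr ⟨isHomogeneous_cone _ _ _, Fin.cases ?_ fun j => ?_⟩
    · exact hqh0 ▸ vanishesToOrder_cone_of_vertex hp0 hp1 d _
    · refine hqhs j ▸ vanishesToOrder_cone_of_dvd (hr j) (by have := j.pos; omega)
        (natDegree_sixfoldRoots_mul_le hd r hh) ?_
      exact ((sixfoldRoots_dvd_iff hinj).mp dvd_rfl j).mul_right h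

theorem finrank_linSys_qh_of_slopes {n d : ℕ} {p : Fin (n + 1) → Fin 3 → ℂ} {c : Fin 2 → ℂ}
    {r : Fin n → ℂ} (hd : 6 * n ≤ d) (hp2 : p 0 2 ≠ 0) (hp0 : p 0 0 = c 0 * p 0 2)
    (hp1 : p 0 1 = c 1 * p 0 2) (hv : ∀ j : Fin n, p j.succ 1 - c 1 * p j.succ 2 ≠ 0)
    (hr : ∀ j : Fin n, p j.succ 0 - c 0 * p j.succ 2 = r j * (p j.succ 1 - c 1 * p j.succ 2))
    (hinj : Function.Injective r) :
    Module.finrank ℂ (linSys p d (qh n d)) = d - 6 * n + 1 := by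
  have hf : Function.Injective ((cone c d ∘ₗ LinearMap.mulLeft ℂ (sixfoldRoots r)).domRestrict
      (degreeLT ℂ (d - 6 * n + 1))) := by
    rw [injective_iff_map_eq_zero]
    rintro ⟨h, hh⟩ hzero
    rw [Polynomial.mem_degreeLT_succ_iff] at hh
    have := eq_zero_of_cone_eq_zero (c := c) (natDegree_sixfoldRoots_mul_le hd r hh) hzero
    exact Subtype.ext ((mul_eq_zero.mp this).resolve_left (sixfoldRoots_ne_zero r))
  rw [linSys_qh_eq_map hd hp2 hp0 hp1 hv hr hinj, ← LinearMap.range_domRestrict,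
    LinearMap.finrank_range_of_inj hf, (Polynomial.degreeLTEquiv ℂ _).finrank_eq,
    Module.finrank_fin_fun]

end QuasiHomogeneous

section Genericity

variable {R : Type*} [CommRing R]

/-- For `p₀ 2 ≠ 0`, homogeneous coordinates of the line through `p₀` and `q` in the pencil of
lines through `p₀`: two points lie on a common line through `p₀` iff these are proportional. -/
def pencilCoords (p₀ q : Fin 3 → R) : Fin 2 → R :=
  ![p₀ 2 * q 0 - p₀ 0 * q 2, p₀ 2 * q 1 - p₀ 1 * q 2]

/-- Nonzero iff `p₀` is off the line `z = 0`, no `pⱼ` lies on the line joining `p₀` to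
`[1 : 0 : 0]`, and no two `pⱼ` lie on a common line through `p₀`. -/
def genericity {n : ℕ} (x : Fin (n + 1) → Fin 3 → R) : R :=
  x 0 2 * (∏ j : Fin n, pencilCoords (x 0) (x j.succ) 1) *
    ∏ jk ∈ (Finset.univ : Finset (Fin n)).offDiag,
      Matrix.det (Matrix.of ![pencilCoords (x 0) (x jk.1.succ), pencilCoords (x 0) (x jk.2.succ)])

theorem map_genericity {S : Type*} [CommRing S] (φ : R →+* S) {n : ℕ}
    (x : Fin (n + 1) → Fin 3 → R) : φ (genericity x) = genericity fun i k => φ (x i k) := by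
  simp [genericity, pencilCoords, map_prod, Matrix.det_fin_two]

theorem genericity_X_ne_zero (n : ℕ) :
    genericity (fun i k => (X (i, k) : MvPolynomial (Fin (n + 1) × Fin 3) ℂ)) ≠ 0 := by
  set w : Fin (n + 1) → Fin 3 → ℂ := Fin.cons ![0, 0, 1] fun j => ![1, (j : ℂ) + 1, 0]
  have hpencil (j : Fin n) : pencilCoords (w 0) (w j.succ) = ![1, (j : ℂ) + 1] := by
    ext i; fin_cases i <;> simp [w, pencilCoords]
  have hw : genericity w ≠ 0 := by
    refine mul_ne_zero (mul_ne_zero (by simp [w]) (Finset.prod_ne_zero_iff.mpr fun j _ => ?_))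
      (Finset.prod_ne_zero_iff.mpr fun jk hjk => ?_)
    · simpa [hpencil] using Nat.cast_add_one_ne_zero (j : ℕ)
    · have hne : (jk.1 : ℕ) ≠ jk.2 := Fin.val_injective.ne (Finset.mem_offDiag.mp hjk).2.2
      simpa [hpencil, Matrix.det_fin_two, sub_eq_zero] using hne.symm
  intro h
  apply hw
  simpa [map_genericity] using congrArg (eval fun x => w x.1 x.2) h

end Genericity

theorem finrank_linSys_qh {n d : ℕ} {p : Fin (n + 1) → Fin 3 → ℂ} (hd : 6 * n ≤ d)
    (hp : genericity p ≠ 0) : Module.finrank ℂ (linSys p d (qh n d)) = d - 6 * n + 1 := by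
  simp only [genericity, mul_ne_zero_iff, Finset.prod_ne_zero_iff, Finset.mem_univ,
    Finset.mem_offDiag, true_and, forall_const] at hp
  obtain ⟨⟨hp2, hv⟩, hdet⟩ := hp
  set U : Fin n → ℂ := fun j => pencilCoords (p 0) (p j.succ) 0
  set V : Fin n → ℂ := fun j => pencilCoords (p 0) (p j.succ) 1
  have hU (j : Fin n) : p j.succ 0 - p 0 0 / p 0 2 * p j.succ 2 = U j / p 0 2 := by
    simp only [U, pencilCoords, Matrix.cons_val_zero]; field_simp
  have hV (j : Fin n) : p j.succ 1 - p 0 1 / p 0 2 * p j.succ 2 = V j / p 0 2 := by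
    simp only [V, pencilCoords, Matrix.cons_val_one, Matrix.cons_val_fin_one]; field_simp
  -- `p₀ = p₀₂ • [c₀ : c₁ : 1]`, and the line `p₀pⱼ` has slope `Uⱼ / Vⱼ`.
  refine finrank_linSys_qh_of_slopes (c := ![p 0 0 / p 0 2, p 0 1 / p 0 2])
    (r := fun j => U j / V j) hd hp2 (by simp [hp2]) (by simp [hp2]) (fun j => ?_) (fun j => ?_)
    (fun j k hjk => ?_)
  · simpa [hV] using div_ne_zero (hv j) hp2
  · simpa [hU, hV] using (div_mul_div_cancel₀ (hv j)).symm
  · by_contra hne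
    refine hdet (j, k) hne ?_
    rw [div_eq_div_iff (hv j) (hv k)] at hjk
    rw [Matrix.det_fin_two]
    simp only [Matrix.of_apply, Matrix.cons_val_zero, Matrix.cons_val_one]
    linear_combination hjk

theorem virtDim_qh (d n : ℕ) : virtDim d (qh n d) = d - 21 * n := by
  have hd : (d : ℤ) * (d + 3) / 2 = d * (d + 1) / 2 + d := by
    rw [show (d : ℤ) * (d + 3) = d * (d + 1) + d * 2 by ring,
      Int.add_mul_ediv_right _ _ two_ne_zero]
  simp [virtDim, Fin.sum_univ_succ, qh, Fin.succ_ne_zero, hd, mul_comm]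

theorem special_L_d_d_sixn (d n : ℕ) (hn : 1 ≤ n) (hd : 6 * n ≤ d) :
    virtDim d (qh n d) = (d : ℤ) - 21 * n ∧
    Generically (n + 1) (fun p =>
      projDim p d (qh n d) = (d : ℤ) - 6 * n ∧
      projDim p d (qh n d) > max (-1) (virtDim d (qh n d))) := by
  refine ⟨virtDim_qh d n, genericity fun i k => X (i, k), genericity_X_ne_zero n,
    fun p _ hp => ?_⟩
  simp only [map_genericity, eval_X] at hp
  have hrank := finrank_linSys_qh hd hp
  simp only [projDim, hrank, virtDim_qh]
  omega
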